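/- arXiv:1609.00420 — 2 statements merged into one kernel-verified Lean document; each statement's English description precedes it below -/
import Mathlib

section
/- Let G₁, …, G_k be pairwise vertex-disjoint finite simple graphs, each having at least one edge, and let c_i = d_{G_i} / Σ_j d_{G_j}. Then the von Neumann entropy of their disjoint union satisfies S(G₁ ∪̇ ⋯ ∪̇ G_k) = Σ_{i=1}^k c_i·S(G_i) + Σ_{i=1}^k c_i·log₂(1/c_i). -/
open Matrix Real Finset

namespace VNE

variable {V : Type*} [Fintype V] [DecidableEq V]

/-- The density matrix `ρ(G) = L(G) / tr (L(G))` of a graph. -/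
noncomputable def rho (G : SimpleGraph V) : Matrix V V ℝ :=
  letI := Classical.decRel G.Adj
  ((G.lapMatrix ℝ).trace)⁻¹ • G.lapMatrix ℝ

lemma rho_isHermitian (G : SimpleGraph V) : (rho G).IsHermitian := by
  letI := Classical.decRel G.Adj
  have h : (G.lapMatrix ℝ).IsHermitian := (SimpleGraph.posSemidef_lapMatrix ℝ G).1
  unfold rho
  unfold Matrix.IsHermitian at h ⊢
  rw [Matrix.conjTranspose_smul, h, star_trivial]

/-- The eigenvalues of the density matrix of `G`. -/
noncomputable def eigs (G : SimpleGraph V) : V → ℝ :=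
  (rho_isHermitian G).eigenvalues

/-- The von Neumann entropy of a graph. -/
noncomputable def vnEntropy (G : SimpleGraph V) : ℝ :=
  ∑ v, -(eigs G v * Real.logb 2 (eigs G v))

/-- The Rényi α-entropy of a graph. -/
noncomputable def renyiEntropy (α : ℝ) (G : SimpleGraph V) : ℝ :=
  (1 / (1 - α)) * Real.logb 2 (∑ v, eigs G v ^ α)

/-- The Rényi 2-entropy of a graph, `−log₂ tr(ρ(G)²)`. -/
noncomputable def renyi2 (G : SimpleGraph V) : ℝ :=
  - Real.logb 2 ((rho G * rho G).trace)

/-- `tr₂(G) = tr(ρ(G)²)`. -/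
noncomputable def tr2 (G : SimpleGraph V) : ℝ :=
  (rho G * rho G).trace

/-- The degree of a vertex, as a real number. -/
noncomputable def deg (G : SimpleGraph V) (v : V) : ℝ :=
  letI := Classical.decRel G.Adj
  (G.degree v : ℝ)

/-- The degree sum `d_G` of a graph. -/
noncomputable def degSum (G : SimpleGraph V) : ℝ :=
  ∑ v, deg G v

/-- The star `K_{1,n-1}` on `n` vertices, with center the vertex `0`. -/
def starOn (n : ℕ) : SimpleGraph (Fin n) where
  Adj x y := x ≠ y ∧ (x.val = 0 ∨ y.val = 0)
  symm := ⟨fun _ _ h => ⟨h.1.symm, h.2.symm⟩⟩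
  loopless := ⟨fun _ h => h.1 rfl⟩

/-- The disjoint union of a family of graphs on pairwise disjoint vertex sets,
realized as a graph on the sigma type. -/
def sigmaUnion {k : ℕ} {W : Fin k → Type*} (G : ∀ i, SimpleGraph (W i)) :
    SimpleGraph (Σ i, W i) where
  Adj x y := ∃ (i : Fin k) (a b : W i), (G i).Adj a b ∧ x = ⟨i, a⟩ ∧ y = ⟨i, b⟩
  symm := by
    constructor
    rintro x y ⟨i, a, b, hab, rfl, rfl⟩
    exact ⟨i, b, a, hab.symm, rfl, rfl⟩
  loopless := by
    constructor
    rintro x ⟨i, a, b, hab, rfl, h⟩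
    exact hab.ne (eq_of_heq (Sigma.mk.inj_iff.mp h).2)

/-! ### Auxiliary lemmas -/

open Polynomial in
/-- The characteristic polynomial is invariant under conjugation. -/
lemma charpoly_conj {n : Type*} [Fintype n] [DecidableEq n] (P Q A : Matrix n n ℝ)
    (hPQ : P * Q = 1) : (P * A * Q).charpoly = A.charpoly := by
  have h1 : (C : ℝ →+* ℝ[X]).mapMatrix P * (C : ℝ →+* ℝ[X]).mapMatrix Q = 1 := by
    rw [← _root_.map_mul, hPQ, _root_.map_one]
  have hC : charmatrix (P * A * Q)
      = (C : ℝ →+* ℝ[X]).mapMatrix P * charmatrix A * (C : ℝ →+* ℝ[X]).mapMatrix Q := by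
    unfold charmatrix
    rw [mul_sub, sub_mul]
    congr 1
    · rw [scalar_apply, ← smul_one_eq_diagonal, mul_smul_comm, smul_mul_assoc, mul_one, h1]
    · rw [_root_.map_mul, _root_.map_mul]
  have h2 : ((C : ℝ →+* ℝ[X]).mapMatrix P).det * ((C : ℝ →+* ℝ[X]).mapMatrix Q).det = 1 := by
    rw [← det_mul, h1, det_one]
  unfold Matrix.charpoly
  rw [hC, det_mul, det_mul, mul_comm, ← mul_assoc,
    mul_comm _ ((C : ℝ →+* ℝ[X]).mapMatrix P).det, h2, one_mul]

open Polynomial in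
lemma charpoly_diag {n : Type*} [Fintype n] [DecidableEq n] (d : n → ℝ) :
    (diagonal d).charpoly = ∏ v, (X - C (d v)) := by
  unfold Matrix.charpoly
  have : charmatrix (diagonal d) = diagonal (fun v => (X : ℝ[X]) - C (d v)) := by
    ext i j
    by_cases h : i = j <;> simp [charmatrix_apply, diagonal_apply, h]
  rw [this, det_diagonal]

open Polynomial in
lemma charpoly_of_diag {n : Type*} [Fintype n] [DecidableEq n] {A : Matrix n n ℝ}
    (d : n → ℝ) (U : Matrix.unitaryGroup n ℝ)
    (h : A = (U : Matrix n n ℝ) * diagonal d * star (U : Matrix n n ℝ)) :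
    A.charpoly = ∏ v, (X - C (d v)) := by
  rw [h, charpoly_conj _ _ _ U.prop.2, charpoly_diag]

open Polynomial in
lemma charpoly_hermitian {n : Type*} [Fintype n] [DecidableEq n] {A : Matrix n n ℝ}
    (hA : A.IsHermitian) : A.charpoly = ∏ v, (X - C (hA.eigenvalues v)) :=
  charpoly_of_diag _ _ (by simpa using hA.spectral_theorem)

lemma trace_hermitian {n : Type*} [Fintype n] [DecidableEq n] {A : Matrix n n ℝ}
    (hA : A.IsHermitian) : A.trace = ∑ v, hA.eigenvalues v := by
  have h : A = (hA.eigenvectorUnitary : Matrix n n ℝ) * diagonal hA.eigenvalues *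
      star (hA.eigenvectorUnitary : Matrix n n ℝ) := by simpa using hA.spectral_theorem
  rw [congrArg Matrix.trace h, trace_mul_cycle, hA.eigenvectorUnitary.prop.1,
    one_mul, trace_diagonal]

open Polynomial in
lemma roots_of_prods {n : Type*} [Fintype n] (g : n → ℝ) (S : Multiset ℝ)
    (h : ∏ v, (X - C (g v)) = (S.map fun a => X - C a).prod) :
    (univ.val.map g) = S := by
  have e : (∏ v, (X - C (g v))) = (((univ.val.map g)).map fun a => X - C a).prod := by
    rw [Finset.prod_eq_multiset_prod, Multiset.map_map]
    rfl
  have := congrArg Polynomial.roots (e.symm.trans h)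
  rwa [roots_multiset_prod_X_sub_C, roots_multiset_prod_X_sub_C] at this

lemma charpoly_congr {n : Type*} (F1 F2 : Fintype n) (D1 D2 : DecidableEq n)
    (A : Matrix n n ℝ) :
    @Matrix.charpoly ℝ _ n D1 F1 A = @Matrix.charpoly ℝ _ n D2 F2 A := by
  obtain rfl : F1 = F2 := Subsingleton.elim _ _
  obtain rfl : D1 = D2 := Subsingleton.elim _ _
  rfl

/-- The Laplacian with a `Classical` decidability instance. -/
noncomputable def lap (G : SimpleGraph V) : Matrix V V ℝ :=
  letI := Classical.decRel G.Adj
  G.lapMatrix ℝ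

lemma rho_eq_lap (G : SimpleGraph V) : rho G = ((lap G).trace)⁻¹ • lap G := rfl

lemma lap_apply_diag (G : SimpleGraph V) (x : V) : lap G x x = deg G x := by
  letI := Classical.decRel G.Adj
  simp [lap, deg, SimpleGraph.lapMatrix, SimpleGraph.degMatrix, Matrix.sub_apply,
    Matrix.diagonal_apply]

lemma lap_apply_adj (G : SimpleGraph V) {x y : V} (hne : x ≠ y) (h : G.Adj x y) :
    lap G x y = -1 := by
  letI := Classical.decRel G.Adj
  simp [lap, SimpleGraph.lapMatrix, SimpleGraph.degMatrix, Matrix.sub_apply,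
    Matrix.diagonal_apply, hne, h]

lemma lap_apply_nadj (G : SimpleGraph V) {x y : V} (hne : x ≠ y) (h : ¬ G.Adj x y) :
    lap G x y = 0 := by
  letI := Classical.decRel G.Adj
  simp [lap, SimpleGraph.lapMatrix, SimpleGraph.degMatrix, Matrix.sub_apply,
    Matrix.diagonal_apply, hne, h]

lemma trace_lap (G : SimpleGraph V) : (lap G).trace = degSum G := by
  unfold Matrix.trace degSum
  exact Finset.sum_congr rfl fun v _ => lap_apply_diag G v

lemma degSum_nonneg (G : SimpleGraph V) : 0 ≤ degSum G := by
  letI := Classical.decRel G.Adj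
  exact Finset.sum_nonneg fun v _ => by simp only [deg]; exact Nat.cast_nonneg _

lemma degSum_pos (G : SimpleGraph V) (h : G.edgeSet.Nonempty) : 0 < degSum G := by
  letI := Classical.decRel G.Adj
  obtain ⟨e, he⟩ := h
  induction e with
  | h a b =>
    rw [SimpleGraph.mem_edgeSet] at he
    refine Finset.sum_pos' (fun v _ => by simp only [deg]; exact Nat.cast_nonneg _)
      ⟨a, Finset.mem_univ a, ?_⟩
    have : 0 < G.degree a := G.degree_pos_iff_exists_adj a |>.2 ⟨b, he⟩
    simp only [deg]
    exact_mod_cast this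

lemma trace_rho (G : SimpleGraph V) (h : G.edgeSet.Nonempty) : (rho G).trace = 1 := by
  rw [rho_eq_lap, Matrix.trace_smul, trace_lap, smul_eq_mul,
    inv_mul_cancel₀ (ne_of_gt (degSum_pos G h))]

lemma sum_eigs_eq_one (G : SimpleGraph V) (h : G.edgeSet.Nonempty) :
    ∑ v, eigs G v = 1 := by
  simp only [eigs]
  rw [← trace_hermitian (rho_isHermitian G), trace_rho G h]

lemma rho_posSemidef (G : SimpleGraph V) : (rho G).PosSemidef := by
  letI := Classical.decRel G.Adj
  have hL := SimpleGraph.posSemidef_lapMatrix ℝ G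
  have ht : 0 ≤ (G.lapMatrix ℝ).trace := by
    rw [show G.lapMatrix ℝ = lap G from rfl, trace_lap]
    exact degSum_nonneg G
  refine ⟨rho_isHermitian G, fun x => ?_⟩
  exact (hL.smul (inv_nonneg.mpr ht)).2 x

lemma eigs_nonneg (G : SimpleGraph V) (v : V) : 0 ≤ eigs G v :=
  (rho_posSemidef G).eigenvalues_nonneg v

section Sigma

variable {k : ℕ} {W : Fin k → Type*} [∀ i, Fintype (W i)] [∀ i, DecidableEq (W i)]
  (G : ∀ i, SimpleGraph (W i))

lemma sigmaUnion_adj_mk (i : Fin k) (a : W i) (y : Σ j, W j) :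
    (sigmaUnion G).Adj ⟨i, a⟩ y ↔ ∃ b, (G i).Adj a b ∧ y = ⟨i, b⟩ := by
  constructor
  · rintro ⟨j, a', b', hab, h1, rfl⟩
    obtain ⟨rfl, h2⟩ := Sigma.mk.inj_iff.mp h1
    obtain rfl := eq_of_heq h2
    exact ⟨b', hab, rfl⟩
  · rintro ⟨b, hab, rfl⟩
    exact ⟨i, a, b, hab, rfl, rfl⟩

lemma sigmaUnion_adj_same (i : Fin k) (a b : W i) :
    (sigmaUnion G).Adj ⟨i, a⟩ ⟨i, b⟩ ↔ (G i).Adj a b := by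
  rw [sigmaUnion_adj_mk]
  constructor
  · rintro ⟨b', hab, h⟩
    obtain rfl := eq_of_heq (Sigma.mk.inj_iff.mp h).2.symm
    exact hab
  · exact fun h => ⟨b, h, rfl⟩

lemma sigmaUnion_not_adj (i j : Fin k) (hij : i ≠ j) (a : W i) (b : W j) :
    ¬ (sigmaUnion G).Adj ⟨i, a⟩ ⟨j, b⟩ := by
  rw [sigmaUnion_adj_mk]
  rintro ⟨b', _, h⟩
  exact hij ((Sigma.mk.inj_iff.mp h).1).symm

lemma deg_sigmaUnion (i : Fin k) (a : W i) :
    deg (sigmaUnion G) ⟨i, a⟩ = deg (G i) a := by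
  letI := Classical.decRel (sigmaUnion G).Adj
  letI := Classical.decRel (G i).Adj
  simp only [deg, SimpleGraph.degree]
  norm_cast
  have : (sigmaUnion G).neighborFinset ⟨i, a⟩
      = ((G i).neighborFinset a).map ⟨Sigma.mk i, sigma_mk_injective⟩ := by
    ext y
    simp only [SimpleGraph.mem_neighborFinset, Finset.mem_map, Function.Embedding.coeFn_mk,
      sigmaUnion_adj_mk]
    constructor
    · rintro ⟨b, hab, rfl⟩; exact ⟨b, hab, rfl⟩
    · rintro ⟨b, hab, rfl⟩; exact ⟨b, hab, rfl⟩
  rw [this, Finset.card_map]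

lemma lap_sigmaUnion_same (i : Fin k) (a b : W i) :
    lap (sigmaUnion G) ⟨i, a⟩ ⟨i, b⟩ = lap (G i) a b := by
  by_cases hab : a = b
  · subst hab
    rw [lap_apply_diag, lap_apply_diag, deg_sigmaUnion]
  · have hne : (⟨i, a⟩ : Σ j, W j) ≠ ⟨i, b⟩ := by
      intro h
      exact hab (eq_of_heq (Sigma.mk.inj_iff.mp h).2)
    by_cases h : (G i).Adj a b
    · rw [lap_apply_adj _ hne ((sigmaUnion_adj_same G i a b).mpr h), lap_apply_adj _ hab h]
    · rw [lap_apply_nadj _ hne (fun hc => h ((sigmaUnion_adj_same G i a b).mp hc)),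
        lap_apply_nadj _ hab h]

lemma lap_sigmaUnion_ne {i j : Fin k} (hij : i ≠ j) (a : W i) (b : W j) :
    lap (sigmaUnion G) ⟨i, a⟩ ⟨j, b⟩ = 0 := by
  have hne : (⟨i, a⟩ : Σ j, W j) ≠ ⟨j, b⟩ := by
    intro h
    exact hij (Sigma.mk.inj_iff.mp h).1
  exact lap_apply_nadj _ hne (sigmaUnion_not_adj G i j hij a b)

lemma degSum_sigmaUnion : degSum (sigmaUnion G) = ∑ i, degSum (G i) := by
  unfold degSum
  rw [← Finset.univ_sigma_univ, Finset.sum_sigma]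
  exact Finset.sum_congr rfl fun i _ => Finset.sum_congr rfl fun a _ => deg_sigmaUnion G i a

/-- Equivalence between `W i` and the fiber of `Sigma.fst` over `i`. -/
def blockEquiv (i : Fin k) : W i ≃ {x : Σ j, W j // x.1 = i} where
  toFun a := ⟨⟨i, a⟩, rfl⟩
  invFun x := cast (congrArg W x.2) x.1.2
  left_inv a := rfl
  right_inv := by rintro ⟨⟨j, a⟩, rfl⟩; rfl

end Sigma

theorem vnEntropy_sigmaUnion {k : ℕ} {W : Fin k → Type*} [∀ i, Fintype (W i)]
    [∀ i, DecidableEq (W i)] (G : ∀ i, SimpleGraph (W i))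
    (hG : ∀ i, (G i).edgeSet.Nonempty) (c : Fin k → ℝ)
    (hc : ∀ i, c i = degSum (G i) / ∑ j, degSum (G j)) :
    vnEntropy (sigmaUnion G) =
      ∑ i, c i * vnEntropy (G i) + ∑ i, c i * Real.logb 2 (1 / c i) := by
  rcases Nat.eq_zero_or_pos k with hk | hk
  · subst hk
    have he : IsEmpty (Σ i : Fin 0, W i) := by
      constructor; rintro ⟨i, _⟩; exact i.elim0
    simp [vnEntropy]
  have hne : ∀ i, Nonempty (W i) := by
    intro i
    obtain ⟨e, he⟩ := hG i
    induction e with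
    | h a b => exact ⟨a⟩
  have hd : ∀ i, 0 < degSum (G i) := fun i => degSum_pos _ (hG i)
  have htpos : 0 < ∑ j, degSum (G j) :=
    Finset.sum_pos (fun i _ => hd i) ⟨⟨0, hk⟩, Finset.mem_univ _⟩
  have hcpos : ∀ i, 0 < c i := fun i => by
    rw [hc i]; exact div_pos (hd i) htpos
  set B : ∀ i, Matrix (W i) (W i) ℝ := fun i => c i • rho (G i) with hB
  -- the charpoly of each block
  have hBchar : ∀ i, (B i).charpoly
      = ∏ w, (Polynomial.X - Polynomial.C (c i * eigs (G i) w)) := by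
    intro i
    apply charpoly_of_diag _ ((rho_isHermitian (G i)).eigenvectorUnitary)
    have h : rho (G i) = ((rho_isHermitian (G i)).eigenvectorUnitary : Matrix (W i) (W i) ℝ) *
        diagonal (eigs (G i)) *
        star ((rho_isHermitian (G i)).eigenvectorUnitary : Matrix (W i) (W i) ℝ) := by
      simpa [eigs] using (rho_isHermitian (G i)).spectral_theorem
    calc B i = c i • rho (G i) := rfl
    _ = c i • (((rho_isHermitian (G i)).eigenvectorUnitary : Matrix (W i) (W i) ℝ) *
          diagonal (eigs (G i)) *
          star ((rho_isHermitian (G i)).eigenvectorUnitary : Matrix (W i) (W i) ℝ)) := by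
        rw [← h]
    _ = _ := by
        rw [show (fun w => c i * eigs (G i) w) = c i • eigs (G i) from rfl,
          diagonal_smul, mul_smul_comm, smul_mul_assoc]
  -- the density matrix of the union is block diagonal with blocks `B i`
  have hkey : ∀ (i : Fin k) (a b : W i),
      rho (sigmaUnion G) ⟨i, a⟩ ⟨i, b⟩ = B i a b := by
    intro i a b
    rw [rho_eq_lap, Matrix.smul_apply, trace_lap, degSum_sigmaUnion, lap_sigmaUnion_same]
    simp only [hB, Matrix.smul_apply, rho_eq_lap, trace_lap, smul_eq_mul]
    rw [hc i]
    have h1 : degSum (G i) ≠ 0 := ne_of_gt (hd i)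
    have h2 : (∑ j, degSum (G j)) ≠ 0 := ne_of_gt htpos
    field_simp
  have hblocktri : (rho (sigmaUnion G)).BlockTriangular Sigma.fst := by
    rintro ⟨i, a⟩ ⟨j, b⟩ hlt
    have hij : i ≠ j := (ne_of_lt hlt).symm
    rw [rho_eq_lap, Matrix.smul_apply, lap_sigmaUnion_ne G hij, smul_zero]
  have hsq : ∀ i, ((rho (sigmaUnion G)).toSquareBlock Sigma.fst i).charpoly
      = (B i).charpoly := by
    intro i
    rw [← charpoly_reindex (blockEquiv i) (B i)]
    congr 1
    ext x y
    rcases x with ⟨⟨jx, ax⟩, hx⟩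
    rcases y with ⟨⟨jy, ay⟩, hy⟩
    cases hx
    cases hy
    rw [Matrix.toSquareBlock_def]
    exact (hkey jx ax ay).trans rfl
  have hcharsig : (rho (sigmaUnion G)).charpoly = ∏ i, (B i).charpoly := by
    rw [hblocktri.charpoly]
    refine Finset.prod_congr ?_ fun i _ => (charpoly_congr _ _ _ _ _).trans (hsq i)
    have himg : ∀ (D : DecidableEq (Fin k)),
        @Finset.image _ _ D (Sigma.fst : (Σ j, W j) → Fin k) univ = univ := by
      intro D
      obtain rfl : D = instDecidableEqFin k := Subsingleton.elim _ _
      apply Finset.eq_univ_iff_forall.mpr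
      intro i
      obtain ⟨a⟩ := hne i
      exact Finset.mem_image.mpr ⟨⟨i, a⟩, Finset.mem_univ _, rfl⟩
    exact himg _
  -- identify the multiset of eigenvalues of the union
  have hprodsig : (rho (sigmaUnion G)).charpoly
      = ∏ v : (Σ i, W i), (Polynomial.X - Polynomial.C (eigs (sigmaUnion G) v)) :=
    charpoly_hermitian (rho_isHermitian (sigmaUnion G))
  set S : Multiset ℝ :=
    (univ.val : Multiset (Fin k)).bind (fun i => univ.val.map (fun w => c i * eigs (G i) w))
    with hSdef
  have hms : (univ.val.map (eigs (sigmaUnion G))) = S := by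
    apply roots_of_prods
    calc ∏ v : (Σ i, W i), (Polynomial.X - Polynomial.C (eigs (sigmaUnion G) v))
        = ∏ i, (B i).charpoly := by rw [← hprodsig, hcharsig]
    _ = ∏ i, ∏ w, (Polynomial.X - Polynomial.C (c i * eigs (G i) w)) :=
        Finset.prod_congr rfl fun i _ => hBchar i
    _ = (S.map fun a => Polynomial.X - Polynomial.C a).prod := by
        rw [hSdef, Multiset.map_bind, Multiset.prod_bind, Finset.prod_eq_multiset_prod]
        refine congrArg Multiset.prod (Multiset.map_congr rfl fun i _ => ?_)
        rw [Finset.prod_eq_multiset_prod, Multiset.map_map]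
        rfl
  -- entropy as a sum over blocks
  have hsum : vnEntropy (sigmaUnion G)
      = ∑ i, ∑ w, -((c i * eigs (G i) w) * Real.logb 2 (c i * eigs (G i) w)) := by
    have e1 : vnEntropy (sigmaUnion G)
        = ((univ.val.map (eigs (sigmaUnion G))).map
            (fun x : ℝ => -(x * Real.logb 2 x))).sum := by
      simp only [vnEntropy]
      rw [Finset.sum_eq_multiset_sum, Multiset.map_map]
      rfl
    rw [e1, hms, hSdef, Multiset.map_bind, Multiset.sum_bind,
      Finset.sum_eq_multiset_sum (univ : Finset (Fin k))]
    refine congrArg Multiset.sum (Multiset.map_congr rfl fun i _ => ?_)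
    rw [Finset.sum_eq_multiset_sum, Multiset.map_map]
    rfl
  -- per-block computation
  have hper : ∀ i, ∑ w, -((c i * eigs (G i) w) * Real.logb 2 (c i * eigs (G i) w))
      = c i * vnEntropy (G i) + c i * Real.logb 2 (1 / c i) := by
    intro i
    have hpt : ∀ w, -((c i * eigs (G i) w) * Real.logb 2 (c i * eigs (G i) w))
        = c i * -(eigs (G i) w * Real.logb 2 (eigs (G i) w))
          + (c i * Real.logb 2 (1 / c i)) * eigs (G i) w := by
      intro w
      rcases (eigs_nonneg (G i) w).eq_or_lt with h0 | hpos
      · rw [← h0]; simp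
      · rw [Real.logb_mul (ne_of_gt (hcpos i)) (ne_of_gt hpos), one_div, Real.logb_inv]
        ring
    rw [Finset.sum_congr rfl fun w _ => hpt w, Finset.sum_add_distrib, ← Finset.mul_sum,
      ← Finset.mul_sum, sum_eigs_eq_one (G i) (hG i), mul_one]
    rfl
  rw [hsum, Finset.sum_congr rfl fun i _ => hper i, Finset.sum_add_distrib]

end VNE
end

section
/- Let α > 1 be a real number, n ≥ 2 an integer, and let G be a connected finite simple graph on n vertices. Then S(G) = H_α(G) if and only if G is isomorphic to the complete graph K_n; in that case S(K_n) = H_α(K_n) = log₂(n−1). -/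
open Matrix Real Finset

namespace VNE

variable {V : Type*} [Fintype V] [DecidableEq V]

set_option linter.unusedSectionVars false




lemma trace_eq_sum_eigenvalues {A : Matrix V V ℝ} (hA : A.IsHermitian) :
    A.trace = ∑ i, hA.eigenvalues i := by
  conv_lhs => rw [hA.spectral_theorem]
  rw [Unitary.conjStarAlgAut_apply, Matrix.trace_mul_cycle, Unitary.coe_star_mul_self, Matrix.one_mul, Matrix.trace_diagonal]
  simp [RCLike.ofReal_real_eq_id]

lemma eigenvalues_sq_of_sq_eq {A : Matrix V V ℝ} (hA : A.IsHermitian) {c : ℝ}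
    (h : A * A = c • A) (i : V) :
    hA.eigenvalues i * hA.eigenvalues i = c * hA.eigenvalues i := by
  have hv := hA.mulVec_eigenvectorBasis i
  have h2 : (A * A) *ᵥ ⇑(hA.eigenvectorBasis i) =
      (hA.eigenvalues i * hA.eigenvalues i) • ⇑(hA.eigenvectorBasis i) := by
    rw [← mulVec_mulVec, hv, mulVec_smul, hv, smul_smul]
  rw [h, smul_mulVec, hv, smul_smul] at h2
  have hvne : ⇑(hA.eigenvectorBasis i) ≠ 0 := by
    intro hc
    exact hA.eigenvectorBasis.orthonormal.ne_zero i (by ext j; exact congrFun hc j)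
  obtain ⟨j, hj⟩ := Function.ne_iff.mp hvne
  have hcf := congrFun h2 j
  simp only [Pi.smul_apply, smul_eq_mul] at hcf
  exact mul_right_cancel₀ hj (by linarith [hcf])

lemma sq_eq_of_eigenvalues {A : Matrix V V ℝ} (hA : A.IsHermitian) {c : ℝ}
    (h : ∀ i, hA.eigenvalues i = 0 ∨ hA.eigenvalues i = c) : A * A = c • A := by
  set U : Matrix V V ℝ := (hA.eigenvectorUnitary : Matrix V V ℝ) with hU
  set D : Matrix V V ℝ := diagonal (RCLike.ofReal ∘ hA.eigenvalues) with hD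
  have hDD : D * D = c • D := by
    rw [hD]
    ext i j
    rcases eq_or_ne i j with rfl | hij
    · rcases h i with h0 | h0 <;>
        simp [Matrix.mul_apply, Matrix.diagonal_apply, RCLike.ofReal_real_eq_id, h0,
          Finset.sum_ite_eq, mul_comm]
    · simp [Matrix.mul_apply, Matrix.diagonal_apply_ne, hij, RCLike.ofReal_real_eq_id,
        Matrix.diagonal_apply, Finset.sum_ite_eq]
  have hsUU : star U * U = 1 := Unitary.coe_star_mul_self hA.eigenvectorUnitary
  have hspec : A = U * D * star U := hA.spectral_theorem
  calc A * A = (U * D * star U) * (U * D * star U) := by rw [← hspec]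
    _ = U * (D * (star U * U) * D) * star U := by
        simp only [Matrix.mul_assoc]
    _ = U * (D * D) * star U := by rw [hsUU, Matrix.mul_one, Matrix.mul_assoc]
    _ = c • (U * D * star U) := by
        rw [hDD, Matrix.mul_smul, Matrix.smul_mul, Matrix.mul_assoc]
    _ = c • A := by rw [← hspec]




lemma lap_apply (G : SimpleGraph V) [DecidableRel G.Adj] (i j : V) :
    G.lapMatrix ℝ i j =
      (if i = j then (G.degree i : ℝ) else 0) - (if G.Adj i j then 1 else 0) := by
  simp [SimpleGraph.lapMatrix, SimpleGraph.degMatrix, Matrix.sub_apply,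
    Matrix.diagonal_apply, SimpleGraph.adjMatrix_apply]

lemma trace_lap_s11 (G : SimpleGraph V) [DecidableRel G.Adj] :
    (G.lapMatrix ℝ).trace = ∑ v, (G.degree v : ℝ) := by
  simp [Matrix.trace, Matrix.diag, lap_apply]

lemma trace_lap_nonneg (G : SimpleGraph V) [DecidableRel G.Adj] :
    (0:ℝ) ≤ (G.lapMatrix ℝ).trace := by
  rw [trace_lap_s11]
  exact Finset.sum_nonneg fun i _ => by positivity

lemma trace_lap_pos (G : SimpleGraph V) [DecidableRel G.Adj] (hG : G.Connected)
    (hV : ∃ x y : V, x ≠ y) : (0:ℝ) < (G.lapMatrix ℝ).trace := by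
  obtain ⟨x, y, hxy⟩ := hV
  obtain ⟨w⟩ := hG.preconnected x y
  have hadj : ∃ z, G.Adj x z := by
    cases w with
    | nil => exact absurd rfl hxy
    | cons h _ => exact ⟨_, h⟩
  rw [trace_lap_s11]
  refine Finset.sum_pos' (fun i _ => by positivity) ⟨x, Finset.mem_univ x, ?_⟩
  have := (G.degree_pos_iff_exists_adj x).mpr hadj
  exact_mod_cast this

lemma complete_of_no_common (G : SimpleGraph V) (hG : G.Connected)
    (h : ∀ i j k : V, i ≠ j → ¬ G.Adj i j → G.Adj i k → G.Adj k j → False) :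
    G = ⊤ := by
  have key : ∀ x y : V, G.Reachable x y → x = y ∨ G.Adj x y := by
    intro x y hr
    obtain ⟨w⟩ := hr
    induction w with
    | nil => exact Or.inl rfl
    | @cons a b c hab p ih =>
      rcases ih with rfl | hbc
      · exact Or.inr hab
      · rcases eq_or_ne a c with rfl | hac
        · exact Or.inl rfl
        · by_contra hc
          push_neg at hc
          exact h a c b hac hc.2 hab hbc
  ext i j
  simp only [SimpleGraph.top_adj]
  constructor
  · exact fun hadj => hadj.ne
  · intro hne
    rcases key i j (hG.preconnected i j) with rfl | hadj
    · exact absurd rfl hne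
    · exact hadj

lemma no_common_of_sq (G : SimpleGraph V) [DecidableRel G.Adj] {μ : ℝ}
    (hL : G.lapMatrix ℝ * G.lapMatrix ℝ = μ • G.lapMatrix ℝ)
    {i j k : V} (hij : i ≠ j) (hnadj : ¬ G.Adj i j) (h1 : G.Adj i k) (h2 : G.Adj k j) :
    False := by
  set L := G.lapMatrix ℝ with hLdef
  have hLij : L i j = 0 := by
    rw [hLdef, lap_apply, if_neg hij, if_neg hnadj]; ring
  have hsum : ∑ m, L i m * L m j = 0 := by
    have := congrFun (congrFun hL i) j
    rw [Matrix.mul_apply] at this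
    rw [this, Matrix.smul_apply, hLij, smul_eq_mul, mul_zero]
  have hnn : ∀ m ∈ Finset.univ, (0:ℝ) ≤ L i m * L m j := by
    intro m _
    rcases eq_or_ne m i with rfl | hmi
    · rw [hLij]; simp
    · rcases eq_or_ne m j with rfl | hmj
      · rw [hLij]; simp
      · have h1' : L i m ≤ 0 := by
          rw [hLdef, lap_apply, if_neg (Ne.symm hmi)]
          split <;> norm_num
        have h2' : L m j ≤ 0 := by
          rw [hLdef, lap_apply, if_neg hmj]
          split <;> norm_num
        exact mul_nonneg_of_nonpos_of_nonpos h1' h2'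
  have hzero := (Finset.sum_eq_zero_iff_of_nonneg hnn).mp hsum k (Finset.mem_univ k)
  have hik : L i k = -1 := by
    rw [hLdef, lap_apply, if_neg h1.ne, if_pos h1]; ring
  have hkj : L k j = -1 := by
    rw [hLdef, lap_apply, if_neg h2.ne, if_pos h2]; ring
  rw [hik, hkj] at hzero
  norm_num at hzero



lemma strictConvexOn_exp_mul {k : ℝ} (hk : k ≠ 0) :
    StrictConvexOn ℝ Set.univ (fun x : ℝ => Real.exp (k * x)) := by
  refine ⟨convex_univ, ?_⟩
  intro x _ y _ hxy a b ha hb hab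
  have hne : k * x ≠ k * y := fun h => hxy (mul_left_cancel₀ hk h)
  have := strictConvexOn_exp.2 (Set.mem_univ (k * x)) (Set.mem_univ (k * y)) hne ha hb hab
  simp only [smul_eq_mul] at this ⊢
  have harg : k * (a * x + b * y) = a * (k * x) + b * (k * y) := by ring
  rw [harg]
  exact this

lemma flat_of_entropy_eq {ι : Type*} [Fintype ι] (p : ι → ℝ) (hp0 : ∀ i, 0 ≤ p i)
    (hp1 : ∑ i, p i = 1) {α : ℝ} (hα : 1 < α)
    (heq : ∑ i, -(p i * Real.logb 2 (p i)) = (1 / (1 - α)) * Real.logb 2 (∑ i, p i ^ α)) :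
    ∀ i j, p i ≠ 0 → p j ≠ 0 → p i = p j := by
  classical
  set S : ℝ := ∑ i, -(p i * Real.logb 2 (p i)) with hSdef
  set t : Finset ι := Finset.univ.filter (fun i => p i ≠ 0) with ht
  have hmemt : ∀ i, i ∈ t ↔ p i ≠ 0 := by
    intro i; simp [ht]
  have htpos : ∀ i ∈ t, 0 < p i := fun i hi =>
    lt_of_le_of_ne (hp0 i) (Ne.symm ((hmemt i).mp hi))
  have ht1 : ∑ i ∈ t, p i = 1 := by
    rw [ht, Finset.sum_filter_ne_zero]; exact hp1
  set k : ℝ := (α - 1) * Real.log 2 with hkdef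
  have hkpos : 0 < k := mul_pos (by linarith) (Real.log_pos one_lt_two)
  set g : ℝ → ℝ := fun x => Real.exp (-k * x) with hgdef
  have hg : StrictConvexOn ℝ Set.univ g := strictConvexOn_exp_mul (by linarith)
  set x : ι → ℝ := fun i => -Real.logb 2 (p i) with hxdef
  have hS : ∑ i ∈ t, p i • x i = S := by
    rw [hSdef]
    rw [Finset.sum_subset (Finset.subset_univ t)]
    · exact Finset.sum_congr rfl fun i _ => by simp only [hxdef, smul_eq_mul]; ring
    · intro i _ hi
      have : p i = 0 := by_contra fun hc => hi ((hmemt i).mpr hc)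
      simp [this]
  have hval : ∀ i ∈ t, p i • g (x i) = p i ^ α := by
    intro i hi
    have hpi := htpos i hi
    have hgx : g (x i) = p i ^ (α - 1) := by
      rw [hgdef, hxdef]
      simp only
      rw [Real.rpow_def_of_pos hpi]
      congr 1
      have hl2 : Real.log 2 ≠ 0 := ne_of_gt (Real.log_pos one_lt_two)
      simp only [hkdef, hxdef, Real.logb]
      field_simp
    rw [hgx, smul_eq_mul]
    nth_rewrite 1 [← Real.rpow_one (p i)]
    rw [← Real.rpow_add hpi]
    norm_num
  have hsumpow : ∑ i ∈ t, p i ^ α = ∑ i, p i ^ α := by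
    refine Finset.sum_subset (Finset.subset_univ t) ?_
    intro i _ hi
    have : p i = 0 := by_contra fun hc => hi ((hmemt i).mpr hc)
    rw [this, Real.zero_rpow (by linarith)]
  have htne : t.Nonempty := by
    rcases Finset.eq_empty_or_nonempty t with h | h
    · rw [h, Finset.sum_empty] at ht1; norm_num at ht1
    · exact h
  have hpow_pos : 0 < ∑ i, p i ^ α := by
    rw [← hsumpow]
    obtain ⟨i0, hi0⟩ := htne
    refine Finset.sum_pos' (fun i hi => Real.rpow_nonneg (hp0 i) α) ⟨i0, hi0, ?_⟩
    exact Real.rpow_pos_of_pos (htpos i0 hi0) α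
  have hlogb : Real.logb 2 (∑ i, p i ^ α) = (1 - α) * S := by
    have h1α : (1:ℝ) - α ≠ 0 := by linarith
    field_simp at heq
    rw [← heq]; ring
  have hSig : ∑ i, p i ^ α = (2:ℝ) ^ ((1 - α) * S) := by
    rw [← hlogb, Real.rpow_logb (by norm_num) (by norm_num) hpow_pos]
  have hgS : g S = ∑ i ∈ t, p i • g (x i) := by
    rw [Finset.sum_congr rfl hval, hsumpow, hSig]
    rw [Real.rpow_def_of_pos (by norm_num : (0:ℝ) < 2)]
    show Real.exp (-k * S) = _
    congr 1
    rw [hkdef]; ring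
  have hiff := hg.map_sum_eq_iff htpos ht1 (fun i _ => Set.mem_univ (x i))
  rw [hS] at hiff
  have hxconst : ∀ j ∈ t, x j = S := hiff.mp hgS
  intro i j hpi hpj
  have hi : i ∈ t := (hmemt i).mpr hpi
  have hj : j ∈ t := (hmemt j).mpr hpj
  have hxi := hxconst i hi
  have hxj := hxconst j hj
  have hlog : Real.logb 2 (p i) = Real.logb 2 (p j) := by
    have h' : x i = x j := hxi.trans hxj.symm
    simp only [hxdef, neg_inj] at h'
    exact h'
  calc p i = (2:ℝ) ^ Real.logb 2 (p i) :=
        (Real.rpow_logb (by norm_num) (by norm_num) (htpos i hi)).symm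
    _ = (2:ℝ) ^ Real.logb 2 (p j) := by rw [hlog]
    _ = p j := Real.rpow_logb (by norm_num) (by norm_num) (htpos j hj)



lemma entropy_of_two_valued {ι : Type*} [Fintype ι] (p : ι → ℝ) {c : ℝ} (hc : 0 < c)
    (h : ∀ i, p i = 0 ∨ p i = c) (hsum : ∑ i, p i = 1) {α : ℝ} (hα : 1 < α) :
    (∑ i, -(p i * Real.logb 2 (p i)) = Real.logb 2 c⁻¹) ∧
    ((1 / (1 - α)) * Real.logb 2 (∑ i, p i ^ α) = Real.logb 2 c⁻¹) := by
  constructor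
  · have hterm : ∀ i, -(p i * Real.logb 2 (p i)) = p i * Real.logb 2 c⁻¹ := by
      intro i
      rcases h i with h0 | h0
      · simp [h0]
      · rw [h0, Real.logb_inv]; ring
    rw [Finset.sum_congr rfl fun i _ => hterm i, ← Finset.sum_mul, hsum, one_mul]
  · have hterm : ∀ i, p i ^ α = p i * c ^ (α - 1) := by
      intro i
      rcases h i with h0 | h0
      · rw [h0, Real.zero_rpow (by linarith), zero_mul]
      · rw [h0]
        nth_rewrite 2 [← Real.rpow_one c]
        rw [← Real.rpow_add hc]
        norm_num
    rw [Finset.sum_congr rfl fun i _ => hterm i, ← Finset.sum_mul, hsum, one_mul]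
    have hlog : Real.logb 2 (c ^ (α - 1)) = (α - 1) * Real.logb 2 c := by
      rw [Real.logb, Real.logb, Real.log_rpow hc]
      ring
    rw [hlog, Real.logb_inv]
    have h1α : (1:ℝ) - α ≠ 0 := by linarith
    field_simp
    ring

lemma top_sq_and_trace {n : ℕ} (hn : 2 ≤ n) :
    rho (⊤ : SimpleGraph (Fin n)) * rho ⊤ = ((n:ℝ) - 1)⁻¹ • rho ⊤ ∧
      (rho (⊤ : SimpleGraph (Fin n))).trace = 1 := by
  letI := Classical.decRel (⊤ : SimpleGraph (Fin n)).Adj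
  have hn0 : (n:ℝ) ≠ 0 := by
    have : (0:ℝ) < n := by exact_mod_cast Nat.lt_of_lt_of_le Nat.zero_lt_two hn
    linarith
  have hn2 : (2:ℝ) ≤ (n:ℝ) := by exact_mod_cast hn
  have hn1 : (n:ℝ) - 1 ≠ 0 := by linarith
  set L := (⊤ : SimpleGraph (Fin n)).lapMatrix ℝ with hLdef
  have hrho : rho (⊤ : SimpleGraph (Fin n)) = (L.trace)⁻¹ • L := rfl
  set J : Matrix (Fin n) (Fin n) ℝ := Matrix.of (fun _ _ => (1:ℝ)) with hJdef
  have hJ : L = (n:ℝ) • (1 : Matrix (Fin n) (Fin n) ℝ) - J := by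
    ext i j
    rw [hLdef, lap_apply]
    have hdeg : ((⊤ : SimpleGraph (Fin n)).degree i : ℝ) = (n:ℝ) - 1 := by
      rw [SimpleGraph.degree_eq_sum_if_adj]
      simp only [SimpleGraph.top_adj]
      have hterm : ∀ j : Fin n, (if i ≠ j then (1:ℝ) else 0)
          = 1 - (if i = j then 1 else 0) := by
        intro j; by_cases h : i = j <;> simp [h]
      rw [Finset.sum_congr rfl fun j _ => hterm j, Finset.sum_sub_distrib,
        Finset.sum_const, Finset.sum_ite_eq]
      simp [Finset.card_univ]
    rcases eq_or_ne i j with rfl | hij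
    · simp [hdeg, hJdef, Matrix.one_apply]
    · simp [hij, hJdef, Matrix.one_apply_ne hij]
  have hJJ : J * J = (n:ℝ) • J := by
    ext i j
    simp [hJdef, Matrix.mul_apply, Finset.card_univ]
  have hL2 : L * L = (n:ℝ) • L := by
    rw [hJ, sub_mul, mul_sub, mul_sub, hJJ]
    simp only [Matrix.smul_mul, Matrix.mul_smul, Matrix.one_mul, Matrix.mul_one, smul_sub]
    abel
  have hT : L.trace = (n:ℝ) * ((n:ℝ) - 1) := by
    rw [hJ, Matrix.trace_sub, Matrix.trace_smul, Matrix.trace_one]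
    have hJtr : J.trace = (n:ℝ) := by
      simp [hJdef, Matrix.trace, Matrix.diag, Finset.card_univ]
    rw [hJtr]
    simp [Finset.card_univ]
    ring
  have hTne : L.trace ≠ 0 := by rw [hT]; exact mul_ne_zero hn0 hn1
  constructor
  · rw [hrho, Matrix.smul_mul, Matrix.mul_smul, smul_smul, hL2, smul_smul, smul_smul]
    congr 1
    rw [hT]
    field_simp
  · rw [hrho, Matrix.trace_smul, smul_eq_mul, inv_mul_cancel₀ hTne]

theorem shannon_eq_renyi_iff_complete {n : ℕ} (hn : 2 ≤ n) (α : ℝ) (hα : 1 < α)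
    (G : SimpleGraph (Fin n)) (hG : G.Connected) :
    (vnEntropy G = renyiEntropy α G ↔ Nonempty (G ≃g (⊤ : SimpleGraph (Fin n)))) ∧
    vnEntropy (⊤ : SimpleGraph (Fin n)) = Real.logb 2 ((n : ℝ) - 1) ∧
    renyiEntropy α (⊤ : SimpleGraph (Fin n)) = Real.logb 2 ((n : ℝ) - 1) := by
  classical
  have hVex : ∃ x y : Fin n, x ≠ y :=
    ⟨⟨0, by omega⟩, ⟨1, by omega⟩, fun h => by simpa using congrArg Fin.val h⟩
  have hn2 : (2:ℝ) ≤ (n:ℝ) := by exact_mod_cast hn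
  have htopc : (0:ℝ) < ((n:ℝ) - 1)⁻¹ := inv_pos.mpr (by linarith)
  obtain ⟨hsqtop, htrtop⟩ := top_sq_and_trace (n := n) hn
  have heigtop : ∀ i, eigs (⊤ : SimpleGraph (Fin n)) i = 0 ∨
      eigs (⊤ : SimpleGraph (Fin n)) i = ((n:ℝ) - 1)⁻¹ := by
    intro i
    have h : eigs (⊤ : SimpleGraph (Fin n)) i * eigs (⊤ : SimpleGraph (Fin n)) i
        = ((n:ℝ) - 1)⁻¹ * eigs (⊤ : SimpleGraph (Fin n)) i :=
      eigenvalues_sq_of_sq_eq (rho_isHermitian ⊤) hsqtop i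
    have hfac : eigs (⊤ : SimpleGraph (Fin n)) i *
        (eigs (⊤ : SimpleGraph (Fin n)) i - ((n:ℝ) - 1)⁻¹) = 0 := by
      have hring : eigs (⊤ : SimpleGraph (Fin n)) i *
          (eigs (⊤ : SimpleGraph (Fin n)) i - ((n:ℝ) - 1)⁻¹)
          = eigs (⊤ : SimpleGraph (Fin n)) i * eigs (⊤ : SimpleGraph (Fin n)) i
            - ((n:ℝ) - 1)⁻¹ * eigs (⊤ : SimpleGraph (Fin n)) i := by ring
      rw [hring, h, sub_self]
    rcases mul_eq_zero.mp hfac with h0 | h0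
    · exact Or.inl h0
    · exact Or.inr (by linarith [h0])
  have hsumtop : ∑ i, eigs (⊤ : SimpleGraph (Fin n)) i = 1 := by
    have h := trace_eq_sum_eigenvalues (rho_isHermitian (⊤ : SimpleGraph (Fin n)))
    rw [htrtop] at h
    exact h.symm
  obtain ⟨hvtop, hrtop⟩ := entropy_of_two_valued (eigs (⊤ : SimpleGraph (Fin n)))
    htopc heigtop hsumtop hα
  rw [inv_inv] at hvtop hrtop
  have hvtop' : vnEntropy (⊤ : SimpleGraph (Fin n)) = Real.logb 2 ((n:ℝ) - 1) := hvtop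
  have hrtop' : renyiEntropy α (⊤ : SimpleGraph (Fin n)) = Real.logb 2 ((n:ℝ) - 1) := hrtop
  refine ⟨⟨?_, ?_⟩, hvtop', hrtop'⟩
  · -- forward direction
    intro heq
    letI := Classical.decRel G.Adj
    have hTpos := trace_lap_pos G hG hVex
    have hTne : (G.lapMatrix ℝ).trace ≠ 0 := ne_of_gt hTpos
    have hrho : rho G = ((G.lapMatrix ℝ).trace)⁻¹ • G.lapMatrix ℝ := rfl
    have htr1 : (rho G).trace = 1 := by
      rw [hrho, Matrix.trace_smul, smul_eq_mul, inv_mul_cancel₀ hTne]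
    have hsum1 : ∑ i, eigs G i = 1 := by
      have h := trace_eq_sum_eigenvalues (rho_isHermitian G)
      rw [htr1] at h
      exact h.symm
    have hnn : ∀ i, 0 ≤ eigs G i := fun i => (rho_posSemidef G).eigenvalues_nonneg i
    have hflat := flat_of_entropy_eq (eigs G) hnn hsum1 hα heq
    have hex : ∃ i0, eigs G i0 ≠ 0 := by
      by_contra hc
      push_neg at hc
      rw [Finset.sum_eq_zero (fun i _ => hc i)] at hsum1
      norm_num at hsum1
    obtain ⟨i0, hi0⟩ := hex
    have hall : ∀ i, eigs G i = 0 ∨ eigs G i = eigs G i0 := by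
      intro i
      by_cases h : eigs G i = 0
      · exact Or.inl h
      · exact Or.inr (hflat i i0 h hi0)
    have hsq : rho G * rho G = eigs G i0 • rho G :=
      sq_eq_of_eigenvalues (rho_isHermitian G) hall
    have hLrho : G.lapMatrix ℝ = (G.lapMatrix ℝ).trace • rho G := by
      rw [hrho, smul_smul, mul_inv_cancel₀ hTne, one_smul]
    have hL2 : G.lapMatrix ℝ * G.lapMatrix ℝ
        = (eigs G i0 * (G.lapMatrix ℝ).trace) • G.lapMatrix ℝ := by
      calc G.lapMatrix ℝ * G.lapMatrix ℝ
          = ((G.lapMatrix ℝ).trace • rho G) * ((G.lapMatrix ℝ).trace • rho G) := by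
            rw [← hLrho]
        _ = ((G.lapMatrix ℝ).trace * (G.lapMatrix ℝ).trace) • (rho G * rho G) := by
            rw [Matrix.smul_mul, Matrix.mul_smul, smul_smul]
        _ = ((G.lapMatrix ℝ).trace * (G.lapMatrix ℝ).trace * eigs G i0) • rho G := by
            rw [hsq, smul_smul]
        _ = (eigs G i0 * (G.lapMatrix ℝ).trace) • ((G.lapMatrix ℝ).trace • rho G) := by
            rw [smul_smul]; congr 1; ring
        _ = (eigs G i0 * (G.lapMatrix ℝ).trace) • G.lapMatrix ℝ := by rw [← hLrho]
    have hcomplete : G = ⊤ :=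
      complete_of_no_common G hG
        (fun i j k hij hnadj h1 h2 => no_common_of_sq G hL2 hij hnadj h1 h2)
    refine ⟨⟨Equiv.refl _, ?_⟩⟩
    intro a b
    simp [hcomplete]
  · -- backward direction
    rintro ⟨e⟩
    have hGtop : G = ⊤ := by
      ext i j
      have h := e.map_adj_iff (v := i) (w := j)
      simp only [SimpleGraph.top_adj] at h ⊢
      constructor
      · exact fun hadj => hadj.ne
      · intro hne
        exact h.mp (fun hc => hne (e.toEquiv.injective hc))
    rw [hGtop]
    exact hvtop'.trans hrtop'.symm

end VNE
end
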